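/- A function p : L^n → L is a polynomial function if and only if p(x_1,…,x_n) = ⋁_{I ⊆ {1,…,n}} ( p(e_I) ∧ ⋀_{i∈I} x_i ) for all x ∈ L^n. Furthermore, a function of this form is a Sugeno integral if and only if p(0,…,0) = 0 and p(1,…,1) = 1. -/
import Mathlib


open Function

/-- A lattice polynomial function on a chain `M`: a member of the smallest set of `n`-ary
functions containing all projections and constants and closed under pointwise `⊓` and `⊔`. -/
inductive IsLatticePolynomial {M : Type*} [LinearOrder M] {n : ℕ} :
    ((Fin n → M) → M) → Prop
  | proj (i : Fin n) : IsLatticePolynomial fun x => x i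
  | const (c : M) : IsLatticePolynomial fun _ => c
  | inf {p q : (Fin n → M) → M} :
      IsLatticePolynomial p → IsLatticePolynomial q →
      IsLatticePolynomial fun x => p x ⊓ q x
  | sup {p q : (Fin n → M) → M} :
      IsLatticePolynomial p → IsLatticePolynomial q →
      IsLatticePolynomial fun x => p x ⊔ q x

/-- A Sugeno integral: an idempotent lattice polynomial function. -/
def IsSugenoIntegral {M : Type*} [LinearOrder M] {n : ℕ} (q : (Fin n → M) → M) : Prop :=
  IsLatticePolynomial q ∧ ∀ c : M, q (fun _ => c) = c

/-- `φ` satisfies the boundary conditions: `φ 0 ≤ φ x ≤ φ 1` for all `x`. -/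
def BoundaryCond {α : Type*} {M : Type*} [LE α] [OrderTop α] [OrderBot α] [Preorder M]
    (φ : α → M) : Prop :=
  ∀ x : α, φ ⊥ ≤ φ x ∧ φ x ≤ φ ⊤

/-- The median of three elements of a lattice. -/
def med {α : Type*} [Lattice α] (a b c : α) : α :=
  (a ⊓ b) ⊔ (a ⊓ c) ⊔ (b ⊓ c)

/-- Two `n`-tuples are comonotonic if some permutation sorts both simultaneously. -/
def Comonotone {M : Type*} [Preorder M] {n : ℕ} (y y' : Fin n → M) : Prop :=
  ∃ σ : Equiv.Perm (Fin n), Monotone (y ∘ σ) ∧ Monotone (y' ∘ σ)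

section PiDefs

variable {n : ℕ} {M : Type*} {L : Fin n → Type*}
variable [∀ i, LinearOrder (L i)] [∀ i, BoundedOrder (L i)]
variable [LinearOrder M] [BoundedOrder M]

/-- A pseudo-polynomial function: composition of a lattice polynomial function with unary
maps satisfying the boundary conditions. -/
def IsPseudoPolynomial (f : (∀ i, L i) → M) : Prop :=
  ∃ (p : (Fin n → M) → M) (φ : ∀ i, L i → M),
    IsLatticePolynomial p ∧ (∀ i, BoundaryCond (φ i)) ∧
      ∀ x, f x = p fun i => φ i (x i)

/-- A pseudo-Sugeno integral: composition of a Sugeno integral with unary maps satisfying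
the boundary conditions. -/
def IsPseudoSugenoIntegral (f : (∀ i, L i) → M) : Prop :=
  ∃ (q : (Fin n → M) → M) (φ : ∀ i, L i → M),
    IsSugenoIntegral q ∧ (∀ i, BoundaryCond (φ i)) ∧
      ∀ x, f x = q fun i => φ i (x i)

/-- A Sugeno utility function: composition of a Sugeno integral with local utility
(order-preserving) functions. -/
def IsSugenoUtility (f : (∀ i, L i) → M) : Prop :=
  ∃ (q : (Fin n → M) → M) (φ : ∀ i, L i → M),
    IsSugenoIntegral q ∧ (∀ i, Monotone (φ i)) ∧
      ∀ x, f x = q fun i => φ i (x i)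

/-- `f` is pseudo-median decomposable w.r.t. the unary maps `φ`. -/
def PseudoMedianDecomp (f : (∀ i, L i) → M) (φ : ∀ i, L i → M) : Prop :=
  ∀ (x : ∀ i, L i) (k : Fin n),
    f x = med (f (update x k ⊥)) (φ k (x k)) (f (update x k ⊤))

/-- `d ∈ φ̄⁻¹(c)`: all components of `d` are mapped to `c` by the corresponding `φ i`. -/
def FiberAll (φ : ∀ i, L i → M) (c : M) (d : ∀ i, L i) : Prop :=
  ∀ i, φ i (d i) = c

/-- `f` is pseudo-min homogeneous w.r.t. `φ` with common range `R`. -/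
def PseudoMinHomog (f : (∀ i, L i) → M) (φ : ∀ i, L i → M) (R : Set M) : Prop :=
  ∀ (x : ∀ i, L i), ∀ c ∈ R, ∀ d : ∀ i, L i, FiberAll φ c d →
    f (fun i => x i ⊓ d i) = f x ⊓ c

/-- `f` is pseudo-max homogeneous w.r.t. `φ` with common range `R`. -/
def PseudoMaxHomog (f : (∀ i, L i) → M) (φ : ∀ i, L i → M) (R : Set M) : Prop :=
  ∀ (x : ∀ i, L i), ∀ c ∈ R, ∀ d : ∀ i, L i, FiberAll φ c d →
    f (fun i => x i ⊔ d i) = f x ⊔ c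

/-- Condition (PI): `f d = c` whenever `d ∈ φ̄⁻¹(c)`, `c ∈ R`. -/
def PseudoPI (f : (∀ i, L i) → M) (φ : ∀ i, L i → M) (R : Set M) : Prop :=
  ∀ c ∈ R, ∀ d : ∀ i, L i, FiberAll φ c d → f d = c

/-- `[x]_d`: the tuple whose `i`th component is `0` if `x i ≤ d i`, and `x i` otherwise. -/
def cutBelow (x d : ∀ i, L i) : ∀ i, L i := fun i => if x i ≤ d i then ⊥ else x i

/-- `[x]^d`: the tuple whose `i`th component is `1` if `x i ≥ d i`, and `x i` otherwise. -/
def cutAbove (x d : ∀ i, L i) : ∀ i, L i := fun i => if d i ≤ x i then ⊤ else x i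

/-- `f` is pseudo-horizontally maxitive w.r.t. `φ` with common range `R`. -/
def PseudoHorizMax (f : (∀ i, L i) → M) (φ : ∀ i, L i → M) (R : Set M) : Prop :=
  ∀ (x : ∀ i, L i), ∀ c ∈ R, ∀ d : ∀ i, L i, FiberAll φ c d →
    f x = f (fun i => x i ⊓ d i) ⊔ f (cutBelow x d)

/-- `f` is pseudo-horizontally minitive w.r.t. `φ` with common range `R`. -/
def PseudoHorizMin (f : (∀ i, L i) → M) (φ : ∀ i, L i → M) (R : Set M) : Prop :=
  ∀ (x : ∀ i, L i), ∀ c ∈ R, ∀ d : ∀ i, L i, FiberAll φ c d →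
    f x = f (fun i => x i ⊔ d i) ⊓ f (cutAbove x d)

/-- `f` is pseudo-comonotonic minitive w.r.t. `φ`. -/
def PseudoComonMin (f : (∀ i, L i) → M) (φ : ∀ i, L i → M) : Prop :=
  ∀ x x' : ∀ i, L i,
    Comonotone (fun i => φ i (x i)) (fun i => φ i (x' i)) →
      f (fun i => x i ⊓ x' i) = f x ⊓ f x'

/-- `f` is pseudo-comonotonic maxitive w.r.t. `φ`. -/
def PseudoComonMax (f : (∀ i, L i) → M) (φ : ∀ i, L i → M) : Prop :=
  ∀ x x' : ∀ i, L i,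
    Comonotone (fun i => φ i (x i)) (fun i => φ i (x' i)) →
      f (fun i => x i ⊔ x' i) = f x ⊔ f x'

/-- The disjunctive normal form polynomial determined by the values of `f` on the
characteristic vectors `e_I`: `y ↦ ⋁_{I ⊆ [n]} (f(e_I) ∧ ⋀_{i ∈ I} y i)`. -/
def qDNF (f : (∀ i, L i) → M) : (Fin n → M) → M :=
  fun y => Finset.univ.sup fun I : Finset (Fin n) =>
    f (fun i => if i ∈ I then ⊤ else ⊥) ⊓ I.inf y

end PiDefs

section ChainDefs

variable {n : ℕ} {M : Type*} [LinearOrder M] [BoundedOrder M]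

/-- The DNF polynomial `y ↦ ⋁_{I ⊆ [n]} (p(e_I) ∧ ⋀_{i ∈ I} y i)` for `p : M^n → M`. -/
def polyDNF (p : (Fin n → M) → M) : (Fin n → M) → M :=
  fun y => Finset.univ.sup fun I : Finset (Fin n) =>
    p (fun i => if i ∈ I then ⊤ else ⊥) ⊓ I.inf y

/-- The convex hull of the range of `p` (in a chain). -/
def clRan (p : (Fin n → M) → M) : Set M :=
  {c : M | ∃ a ∈ Set.range p, ∃ b ∈ Set.range p, a ≤ c ∧ c ≤ b}

/-- Median decomposability of `p : M^n → M`. -/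
def MedianDecomp (p : (Fin n → M) → M) : Prop :=
  ∀ (x : Fin n → M) (k : Fin n),
    p x = med (p (update x k ⊥)) (x k) (p (update x k ⊤))

/-- `S`-min homogeneity: `p(x ∧ c) = p(x) ∧ c` for all `c ∈ S`. -/
def MinHomogOn (p : (Fin n → M) → M) (S : Set M) : Prop :=
  ∀ (x : Fin n → M), ∀ c ∈ S, p (fun i => x i ⊓ c) = p x ⊓ c

/-- `S`-max homogeneity: `p(x ∨ c) = p(x) ∨ c` for all `c ∈ S`. -/
def MaxHomogOn (p : (Fin n → M) → M) (S : Set M) : Prop :=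
  ∀ (x : Fin n → M), ∀ c ∈ S, p (fun i => x i ⊔ c) = p x ⊔ c

/-- Range-idempotence: `p(c,…,c) = c` for every `c` in the convex hull of the range. -/
def RangeIdempotent (p : (Fin n → M) → M) : Prop :=
  ∀ c ∈ clRan p, p (fun _ => c) = c

/-- Horizontal minitivity: `p(x) = p(x ∨ c) ∧ p([x]^c)`. -/
def HorizMin (p : (Fin n → M) → M) : Prop :=
  ∀ (x : Fin n → M) (c : M),
    p x = p (fun i => x i ⊔ c) ⊓ p (fun i => if c ≤ x i then ⊤ else x i)

/-- Horizontal maxitivity: `p(x) = p(x ∧ c) ∨ p([x]_c)`. -/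
def HorizMax (p : (Fin n → M) → M) : Prop :=
  ∀ (x : Fin n → M) (c : M),
    p x = p (fun i => x i ⊓ c) ⊔ p (fun i => if x i ≤ c then ⊥ else x i)

end ChainDefs

section Aux

variable {n : ℕ} {M : Type*} [LinearOrder M] [BoundedOrder M]

lemma ILP_mono {p : (Fin n → M) → M} (hp : IsLatticePolynomial p) : Monotone p := by
  induction hp with
  | proj i => exact fun a b h => h i
  | const c => exact monotone_const
  | inf _ _ ih1 ih2 => exact fun a b h => inf_le_inf (ih1 h) (ih2 h)
  | sup _ _ ih1 ih2 => exact fun a b h => sup_le_sup (ih1 h) (ih2 h)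

lemma ILP_finsetSup {α : Type*} [DecidableEq α] (s : Finset α)
    (g : α → (Fin n → M) → M) (h : ∀ a ∈ s, IsLatticePolynomial (g a)) :
    IsLatticePolynomial (fun x => s.sup fun a => g a x) := by
  induction s using Finset.induction with
  | empty => simpa using IsLatticePolynomial.const (⊥ : M)
  | @insert a s ha ih =>
    simp only [Finset.sup_insert]
    exact (h a (Finset.mem_insert_self a s)).sup
      (ih fun b hb => h b (Finset.mem_insert_of_mem hb))

lemma ILP_finsetInf (I : Finset (Fin n)) :
    IsLatticePolynomial (fun x : Fin n → M => I.inf x) := by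
  induction I using Finset.induction with
  | empty => simpa using IsLatticePolynomial.const (⊤ : M)
  | @insert a s ha ih =>
    simp only [Finset.inf_insert]
    exact (IsLatticePolynomial.proj a).inf ih

lemma ILP_polyDNF (f : (Fin n → M) → M) : IsLatticePolynomial (polyDNF f) := by
  unfold polyDNF
  exact ILP_finsetSup _ _ fun I _ =>
    (IsLatticePolynomial.const _).inf (ILP_finsetInf I)

lemma eI_mono {I K : Finset (Fin n)} (h : I ⊆ K) :
    (fun i => if i ∈ I then (⊤ : M) else ⊥) ≤ fun i => if i ∈ K then ⊤ else ⊥ := by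
  intro i
  by_cases hi : i ∈ I
  · simp [hi, h hi]
  · simp [hi]

lemma dnf_of_ILP {p : (Fin n → M) → M} (hp : IsLatticePolynomial p) :
    ∀ x, p x = polyDNF p x := by
  unfold polyDNF
  induction hp with
  | proj i =>
    intro x
    apply le_antisymm
    · refine le_trans ?_ (Finset.le_sup (Finset.mem_univ ({i} : Finset (Fin n))))
      simp
    · apply Finset.sup_le
      intro I _
      by_cases hi : i ∈ I
      · simpa [hi] using Finset.inf_le hi
      · simp [hi]
  | const c =>
    intro x
    apply le_antisymm
    · refine le_trans ?_ (Finset.le_sup (Finset.mem_univ (∅ : Finset (Fin n))))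
      simp
    · exact Finset.sup_le fun I _ => inf_le_left
  | inf hp hq ihp ihq =>
    rename_i p q
    intro x
    beta_reduce
    apply le_antisymm
    · obtain ⟨I₀, -, hI₀⟩ := Finset.exists_mem_eq_sup (Finset.univ : Finset (Finset (Fin n)))
        ⟨∅, Finset.mem_univ ∅⟩
        (fun I => p (fun i => if i ∈ I then (⊤ : M) else ⊥) ⊓ I.inf x)
      obtain ⟨J₀, -, hJ₀⟩ := Finset.exists_mem_eq_sup (Finset.univ : Finset (Finset (Fin n)))
        ⟨∅, Finset.mem_univ ∅⟩
        (fun I => q (fun i => if i ∈ I then (⊤ : M) else ⊥) ⊓ I.inf x)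
      rw [ihp x, ihq x, hI₀, hJ₀]
      refine le_trans ?_ (Finset.le_sup (Finset.mem_univ (I₀ ∪ J₀)))
      have hpm : p (fun i => if i ∈ I₀ then (⊤ : M) else ⊥) ≤
          p (fun i => if i ∈ I₀ ∪ J₀ then (⊤ : M) else ⊥) :=
        ILP_mono hp (eI_mono Finset.subset_union_left)
      have hqm : q (fun i => if i ∈ J₀ then (⊤ : M) else ⊥) ≤
          q (fun i => if i ∈ I₀ ∪ J₀ then (⊤ : M) else ⊥) :=
        ILP_mono hq (eI_mono Finset.subset_union_right)
      have hinf : (I₀ ∪ J₀).inf x = I₀.inf x ⊓ J₀.inf x := Finset.inf_union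
      refine le_inf (le_inf ?_ ?_) ?_
      · exact inf_le_left.trans (inf_le_left.trans hpm)
      · exact inf_le_right.trans (inf_le_left.trans hqm)
      · rw [hinf]
        exact inf_le_inf inf_le_right inf_le_right
    · apply Finset.sup_le
      intro I _
      refine le_inf ?_ ?_
      · rw [ihp x]
        refine le_trans ?_ (Finset.le_sup (Finset.mem_univ I))
        exact inf_le_inf_right _ inf_le_left
      · rw [ihq x]
        refine le_trans ?_ (Finset.le_sup (Finset.mem_univ I))
        exact inf_le_inf_right _ inf_le_right
  | sup hp hq ihp ihq =>
    rename_i p q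
    intro x
    beta_reduce
    apply le_antisymm
    · rw [ihp x, ihq x]
      apply sup_le <;> apply Finset.sup_le <;> intro I _ <;>
        refine le_trans ?_ (Finset.le_sup (Finset.mem_univ I))
      · exact inf_le_inf_right _ le_sup_left
      · exact inf_le_inf_right _ le_sup_right
    · apply Finset.sup_le
      intro I _
      rw [inf_sup_right]
      apply sup_le
      · refine le_sup_of_le_left ?_
        rw [ihp x]
        exact Finset.le_sup (f := fun I => (p fun i => if i ∈ I then (⊤:M) else ⊥) ⊓ I.inf x)
          (Finset.mem_univ I)
      · refine le_sup_of_le_right ?_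
        rw [ihq x]
        exact Finset.le_sup (f := fun I => (q fun i => if i ∈ I then (⊤:M) else ⊥) ⊓ I.inf x)
          (Finset.mem_univ I)

end Aux

/-- Goodstein: `p : Lⁿ → L` is a polynomial function iff
`p(x) = ⋁_{I ⊆ [n]} (p(e_I) ∧ ⋀_{i∈I} x i)` for all `x`; furthermore, a function of this
form is a Sugeno integral iff `p(0,…,0) = 0` and `p(1,…,1) = 1`. -/
theorem goodstein_dnf
    {n : ℕ} {M : Type*} [LinearOrder M] [BoundedOrder M] (p : (Fin n → M) → M) :
    (IsLatticePolynomial p ↔ ∀ x, p x = polyDNF p x) ∧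
    ((∀ x, p x = polyDNF p x) →
      (IsSugenoIntegral p ↔ p (fun _ => ⊥) = ⊥ ∧ p (fun _ => ⊤) = ⊤)) := by
  constructor
  · constructor
    · exact dnf_of_ILP
    · intro h
      rw [show p = polyDNF p from funext h]
      exact ILP_polyDNF p
  · intro h
    constructor
    · rintro ⟨-, hid⟩
      exact ⟨hid ⊥, hid ⊤⟩
    · rintro ⟨h0, h1⟩
      constructor
      · rw [show p = polyDNF p from funext h]
        exact ILP_polyDNF p
      · intro c
        rw [h (fun _ => c)]
        unfold polyDNF
        apply le_antisymm
        · apply Finset.sup_le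
          intro I _
          rcases I.eq_empty_or_nonempty with rfl | hne
          · have : (fun i : Fin n => if i ∈ (∅ : Finset (Fin n)) then (⊤ : M) else ⊥) =
                fun _ => ⊥ := by
              funext i; simp
            simp [this, h0]
          · refine inf_le_right.trans ?_
            rw [Finset.inf_const hne]
        · refine le_trans ?_ (Finset.le_sup (Finset.mem_univ (Finset.univ : Finset (Fin n))))
          have : (fun i : Fin n => if i ∈ (Finset.univ : Finset (Fin n)) then (⊤ : M) else ⊥) =
              fun _ => ⊤ := by
            funext i; simp
          rw [this, h1]
          exact le_inf le_top (Finset.le_inf fun i _ => le_rfl)
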